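/- The trace dual ω of the standard hereditary order Δ, namely the set of e×e matrices M over K such that trace(M·N) lies in the image of R in K for every N ∈ Δ, is equal to the set of e×e matrices M over K with M i j ∈ t^{−1}·R when i < j and M i j ∈ R otherwise (for all indices 0 ≤ i, j ≤ e−1); moreover ω = y^{1−e}·Δ = {y^{1−e}·M : M ∈ Δ}, where y^{1−e} is the (1−e)-th power of the invertible matrix y. -/

import Mathlib

/-!
Pairing `M` against the matrix units `t • E j i` and `E j i` (for `j ≤ i`) of `Δ` forces
`t · M i j ∈ R` for `i < j` and `M i j ∈ R` otherwise, and such entries pair integrally with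
those of `Δ` entry by entry. Left multiplication by `y` moves every row up by one cyclically,
multiplying the row that wraps around by `t`; hence `y ^ e = t`, so `y ^ (1 - e) = t⁻¹ y`, and
`t⁻¹ y Δ` is visibly the entrywise description of the dual.
-/

/-- The standard hereditary order of ramification index `e` over a DVR `R` with
uniformizer `t`, inside the `e × e` matrices over the fraction field `K`. -/
def stdHereditaryOrder (R K : Type*) [CommRing R] [Field K] [Algebra R K]
    (t : R) (e : ℕ) : Set (Matrix (Fin e) (Fin e) K) :=
  {M | ∀ i j : Fin e,
    if (j : ℕ) < (i : ℕ) then ∃ r : R, algebraMap R K (t * r) = M i j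
    else ∃ r : R, algebraMap R K r = M i j}

/-- The matrix `y`: `y i j = 1` if `j = i + 1`, `y i j = t` if `(i,j) = (e-1, 0)`,
and `0` otherwise. -/
def yMat (R K : Type*) [CommRing R] [Field K] [Algebra R K] (t : R) (e : ℕ) :
    Matrix (Fin e) (Fin e) K :=
  Matrix.of fun i j =>
    if (j : ℕ) = (i : ℕ) + 1 then 1
    else if (i : ℕ) = e - 1 ∧ (j : ℕ) = 0 then algebraMap R K t
    else 0

/-- The trace dual `ω` of `Δ`: matrices `M` with `trace (M * N)` in the image of
`R` for all `N ∈ Δ`. -/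
def traceDualSet (R K : Type*) [CommRing R] [Field K] [Algebra R K]
    (t : R) (e : ℕ) : Set (Matrix (Fin e) (Fin e) K) :=
  {M | ∀ N ∈ stdHereditaryOrder R K t e,
    ∃ r : R, algebraMap R K r = Matrix.trace (M * N)}

lemma Units.val_zpow_one_sub_of_pow_eq_smul_one {K A : Type*} [Field K] [Ring A] [Algebra K A]
    (u : Aˣ) {n : ℕ} {c : K} (hc : c ≠ 0) (hu : (u : A) ^ n = c • 1) :
    ((u ^ (1 - n : ℤ) : Aˣ) : A) = c⁻¹ • (u : A) := by
  have hinv : (((u ^ n)⁻¹ : Aˣ) : A) = c⁻¹ • 1 := by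
    apply Units.inv_eq_of_mul_eq_one_right
    rw [Units.val_pow_eq_pow_val, hu, smul_mul_smul, mul_one, mul_inv_cancel₀ hc, one_smul]
  rw [_root_.zpow_sub, zpow_one, zpow_natCast, Units.val_mul, hinv, mul_smul_comm, mul_one]

lemma val_finRotate {e : ℕ} (i : Fin e) :
    (finRotate e i : ℕ) = if (i : ℕ) + 1 < e then (i : ℕ) + 1 else 0 := by
  cases e with
  | zero => exact i.elim0
  | succ n =>
    simp only [coe_finRotate, Fin.ext_iff, Fin.val_last]
    split_ifs <;> omega

section
open Matrix

variable {R K : Type*} [CommRing R] [Field K] [Algebra R K] {t : R} {e : ℕ}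

lemma yMat_apply (i j : Fin e) :
    yMat R K t e i j =
      if j = finRotate e i then (if (i : ℕ) + 1 < e then 1 else algebraMap R K t) else 0 := by
  have := i.isLt
  simp only [yMat, of_apply, Fin.ext_iff, val_finRotate]
  split_ifs <;> first | rfl | omega

lemma yMat_mul_apply (M : Matrix (Fin e) (Fin e) K) (i j : Fin e) :
    (yMat R K t e * M) i j =
      (if (i : ℕ) + 1 < e then 1 else algebraMap R K t) * M (finRotate e i) j := by
  simp [mul_apply, yMat_apply, ite_mul]

lemma yMat_pow_apply {k : ℕ} (hk : k ≤ e) (i j : Fin e) :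
    (yMat R K t e ^ k) i j =
      if (j : ℕ) = i + k then 1 else if (j : ℕ) + e = i + k then algebraMap R K t else 0 := by
  induction k generalizing i with
  | zero =>
    have := j.isLt
    simp only [pow_zero, one_apply, Fin.ext_iff, add_zero]
    split_ifs <;> first | rfl | omega
  | succ k ih =>
    have := i.isLt
    rw [pow_succ', yMat_mul_apply, ih (by omega), val_finRotate]
    split_ifs <;> first | omega | simp

lemma yMat_pow_self : yMat R K t e ^ e = algebraMap R K t • (1 : Matrix (Fin e) (Fin e) K) := by
  ext i j
  have := j.isLt
  rw [yMat_pow_apply le_rfl, Matrix.smul_apply, one_apply]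
  simp only [Fin.ext_iff]
  split_ifs <;> first | omega | simp

lemma isUnit_yMat (ht : algebraMap R K t ≠ 0) : IsUnit (yMat R K t e) := by
  rcases e.eq_zero_or_pos with rfl | he
  · exact isUnit_of_subsingleton _
  · rw [← isUnit_pow_iff he.ne', yMat_pow_self, ← Algebra.algebraMap_eq_smul_one]
    exact ht.isUnit.map _

variable (R K t e) in
def stdHereditaryDual : Set (Matrix (Fin e) (Fin e) K) :=
  {M | ∀ i j : Fin e,
    if (i : ℕ) < (j : ℕ) then ∃ r : R, (algebraMap R K t)⁻¹ * algebraMap R K r = M i j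
    else ∃ r : R, algebraMap R K r = M i j}

lemma single_mem_stdHereditaryOrder {i j : Fin e} {r : R} (h : (j : ℕ) < i → t ∣ r) :
    single i j (algebraMap R K r) ∈ stdHereditaryOrder R K t e := by
  intro a b
  by_cases hab : i = a ∧ j = b
  · obtain ⟨rfl, rfl⟩ := hab
    split_ifs with hlt
    · obtain ⟨s, rfl⟩ := h hlt
      exact ⟨s, by simp⟩
    · exact ⟨r, by simp⟩
  · rw [single_apply_of_ne _ _ _ _ _ hab]
    split_ifs <;> exact ⟨0, by simp⟩

lemma mem_stdHereditaryDual_of_mem_traceDualSet (ht : algebraMap R K t ≠ 0)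
    {M : Matrix (Fin e) (Fin e) K} (hM : M ∈ traceDualSet R K t e) :
    M ∈ stdHereditaryDual R K t e := by
  intro i j
  have pairing_single (r : R) (h : (i : ℕ) < j → t ∣ r) :
      ∃ s : R, algebraMap R K s = M i j * algebraMap R K r := by
    obtain ⟨s, hs⟩ := hM _ (single_mem_stdHereditaryOrder h)
    exact ⟨s, by simpa [trace_mul_single] using hs⟩
  split_ifs with hij
  · obtain ⟨s, hs⟩ := pairing_single t fun _ ↦ dvd_rfl
    exact ⟨s, by rw [hs]; field_simp⟩
  · simpa using pairing_single 1 fun h ↦ absurd h hij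

lemma trace_mul_mem_range_of_mem_stdHereditaryDual (ht : algebraMap R K t ≠ 0)
    {M N : Matrix (Fin e) (Fin e) K} (hM : M ∈ stdHereditaryDual R K t e)
    (hN : N ∈ stdHereditaryOrder R K t e) : trace (M * N) ∈ (algebraMap R K).range := by
  simp only [trace, diag, mul_apply]
  refine Subring.sum_mem _ fun i _ ↦ Subring.sum_mem _ fun j _ ↦ ?_
  have hMij := hM i j
  have hNji := hN j i
  split_ifs at hMij hNji with hij
  · obtain ⟨a, ha⟩ := hMij
    obtain ⟨b, hb⟩ := hNji
    exact ⟨a * b, by rw [← ha, ← hb, map_mul, map_mul]; field_simp⟩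
  · obtain ⟨a, ha⟩ := hMij
    obtain ⟨b, hb⟩ := hNji
    exact ⟨a * b, by rw [← ha, ← hb, map_mul]⟩

lemma traceDualSet_eq_stdHereditaryDual (ht : algebraMap R K t ≠ 0) :
    traceDualSet R K t e = stdHereditaryDual R K t e :=
  Set.Subset.antisymm (fun _ ↦ mem_stdHereditaryDual_of_mem_traceDualSet ht)
    fun _ hM _ hN ↦ trace_mul_mem_range_of_mem_stdHereditaryDual ht hM hN

lemma inv_smul_yMat_mul_mem_stdHereditaryDual (ht : algebraMap R K t ≠ 0)
    {M : Matrix (Fin e) (Fin e) K} (hM : M ∈ stdHereditaryOrder R K t e) :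
    ((algebraMap R K t)⁻¹ • yMat R K t e) * M ∈ stdHereditaryDual R K t e := by
  intro i j
  have hMrot := hM (finRotate e i) j
  have := j.isLt
  rw [Matrix.smul_mul, Matrix.smul_apply, yMat_mul_apply]
  rw [val_finRotate] at hMrot
  split_ifs at hMrot ⊢ <;> first
    | omega
    | obtain ⟨r, hr⟩ := hMrot
      exact ⟨r, by rw [← hr]; simp [ht]⟩

lemma exists_inv_smul_yMat_mul_eq_of_mem_stdHereditaryDual (ht : algebraMap R K t ≠ 0)
    {W : Matrix (Fin e) (Fin e) K} (hW : W ∈ stdHereditaryDual R K t e) :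
    ∃ M ∈ stdHereditaryOrder R K t e, ((algebraMap R K t)⁻¹ • yMat R K t e) * M = W := by
  -- undo the cyclic row shift of `yMat`
  refine ⟨of fun i j ↦
    (if (i : ℕ) = 0 then 1 else algebraMap R K t) * W ((finRotate e).symm i) j, ?_, ?_⟩
  · intro i j
    obtain ⟨i, rfl⟩ := (finRotate e).surjective i
    have hWij := hW i j
    have := j.isLt
    simp only [of_apply, Equiv.symm_apply_apply, val_finRotate]
    split_ifs at hWij ⊢ <;> first
      | omega
      | contradiction
      | obtain ⟨r, hr⟩ := hWij
        exact ⟨r, by rw [← hr]; simp [ht]⟩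
  · ext i j
    rw [Matrix.smul_mul, Matrix.smul_apply, yMat_mul_apply, of_apply, Equiv.symm_apply_apply,
      val_finRotate]
    split_ifs <;> first | omega | contradiction | simp [ht]

lemma image_inv_smul_yMat_mul_stdHereditaryOrder (ht : algebraMap R K t ≠ 0) :
    (fun M ↦ ((algebraMap R K t)⁻¹ • yMat R K t e) * M) '' stdHereditaryOrder R K t e =
      stdHereditaryDual R K t e :=
  Set.Subset.antisymm (Set.image_subset_iff.2 fun _ ↦ inv_smul_yMat_mul_mem_stdHereditaryDual ht)
    fun _ ↦ exists_inv_smul_yMat_mul_eq_of_mem_stdHereditaryDual ht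

end

theorem traceDual_stdHereditaryOrder_general (R K : Type*) [CommRing R] [IsDomain R]
    [IsDiscreteValuationRing R] [Field K] [Algebra R K] [IsFractionRing R K]
    (t : R) (ht : Ideal.span {t} = IsLocalRing.maximalIdeal R)
    (e : ℕ) :
    traceDualSet R K t e
      = {M : Matrix (Fin e) (Fin e) K | ∀ i j : Fin e,
          if (i : ℕ) < (j : ℕ) then
            ∃ r : R, (algebraMap R K t)⁻¹ * algebraMap R K r = M i j
          else ∃ r : R, algebraMap R K r = M i j} ∧
    IsUnit (yMat R K t e) ∧
    ∀ u : (Matrix (Fin e) (Fin e) K)ˣ, (u : Matrix (Fin e) (Fin e) K) = yMat R K t e →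
      traceDualSet R K t e
        = (fun M => ((u ^ ((1 : ℤ) - (e : ℤ)) : (Matrix (Fin e) (Fin e) K)ˣ) :
            Matrix (Fin e) (Fin e) K) * M) '' stdHereditaryOrder R K t e := by
  have ht0 : algebraMap R K t ≠ 0 := by
    rw [Ne, IsFractionRing.to_map_eq_zero_iff]
    exact ((IsDiscreteValuationRing.irreducible_iff_uniformizer t).mpr ht.symm).ne_zero
  have hdual : traceDualSet R K t e = stdHereditaryDual R K t e :=
    traceDualSet_eq_stdHereditaryDual ht0
  refine ⟨hdual, isUnit_yMat ht0, fun u hu ↦ ?_⟩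
  have hpow : (u : Matrix (Fin e) (Fin e) K) ^ e = algebraMap R K t • 1 := hu ▸ yMat_pow_self
  rw [Units.val_zpow_one_sub_of_pow_eq_smul_one u ht0 hpow, hu,
    image_inv_smul_yMat_mul_stdHereditaryOrder ht0, hdual]

/-- The trace dual `ω` of the standard hereditary order `Δ` equals the set of
matrices with `(i,j)` entry in `t⁻¹·R` for `i < j` and in `R` otherwise; moreover
`ω = y^(1-e) · Δ` for the invertible matrix `y`. -/
theorem traceDual_stdHereditaryOrder (R K : Type*) [CommRing R] [IsDomain R]
    [IsDiscreteValuationRing R] [Field K] [Algebra R K] [IsFractionRing R K]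
    (t : R) (ht : Ideal.span {t} = IsLocalRing.maximalIdeal R)
    (e : ℕ) (he : 1 ≤ e) :
    traceDualSet R K t e
      = {M : Matrix (Fin e) (Fin e) K | ∀ i j : Fin e,
          if (i : ℕ) < (j : ℕ) then
            ∃ r : R, (algebraMap R K t)⁻¹ * algebraMap R K r = M i j
          else ∃ r : R, algebraMap R K r = M i j} ∧
    IsUnit (yMat R K t e) ∧
    ∀ u : (Matrix (Fin e) (Fin e) K)ˣ, (u : Matrix (Fin e) (Fin e) K) = yMat R K t e →
      traceDualSet R K t e
        = (fun M => ((u ^ ((1 : ℤ) - (e : ℤ)) : (Matrix (Fin e) (Fin e) K)ˣ) :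
            Matrix (Fin e) (Fin e) K) * M) '' stdHereditaryOrder R K t e :=
  traceDual_stdHereditaryOrder_general R K t ht e
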